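/- arXiv:hep-th/9712124 — 4 statements merged into one kernel-verified Lean document; each statement's English description precedes it below -/
import Mathlib

section
/- Let H be a complex Hilbert space and K ⊆ H a closed real-linear subspace with K ∩ i·K = {0}. Then the map s : K + i·K → H defined by s(h₁ + i·h₂) := −h₁ + i·h₂ for h₁, h₂ ∈ K is well-defined, conjugate-linear, involutive (s(s(x)) = x for all x in its domain), and closed as an unbounded operator: if x_n ∈ K + i·K, x_n → x, and s(x_n) → y in H, then x ∈ K + i·K and s(x) = y. -/
open Filter Topology

/-- For a closed real subspace `K` of a complex Hilbert space with
`K ∩ i·K = {0}`, the map `s(h₁ + i·h₂) := −h₁ + i·h₂` on `D := K + i·K` is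
well-defined (exists and is unique on `D`), conjugate-linear, involutive, and
closed as an unbounded operator. -/
theorem stmt_1 {H : Type*} [NormedAddCommGroup H] [InnerProductSpace ℂ H] [CompleteSpace H]
    (K : Set H) (hKclosed : IsClosed K)
    (hK0 : (0 : H) ∈ K)
    (hKadd : ∀ x y : H, x ∈ K → y ∈ K → x + y ∈ K)
    (hKsmul : ∀ (r : ℝ) (x : H), x ∈ K → ((r : ℂ) • x) ∈ K)
    (hKint : ∀ x : H, x ∈ K → (∃ y ∈ K, x = Complex.I • y) → x = 0)
    (D : Set H) (hD : D = {x : H | ∃ h₁ ∈ K, ∃ h₂ ∈ K, x = h₁ + Complex.I • h₂}) :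
    ∃ s : H → H,
      -- well-defined: s(h₁ + i·h₂) = −h₁ + i·h₂
      (∀ h₁ ∈ K, ∀ h₂ ∈ K, s (h₁ + Complex.I • h₂) = -h₁ + Complex.I • h₂) ∧
      -- uniqueness on D of any such map
      (∀ s' : H → H,
        (∀ h₁ ∈ K, ∀ h₂ ∈ K, s' (h₁ + Complex.I • h₂) = -h₁ + Complex.I • h₂) →
        ∀ x ∈ D, s' x = s x) ∧
      -- s maps D to D
      (∀ x ∈ D, s x ∈ D) ∧
      -- conjugate-linear on D
      (∀ x ∈ D, ∀ y ∈ D, s (x + y) = s x + s y) ∧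
      (∀ (c : ℂ), ∀ x ∈ D, s (c • x) = (starRingEnd ℂ) c • s x) ∧
      -- involutive on D
      (∀ x ∈ D, s (s x) = x) ∧
      -- closed as an unbounded operator
      (∀ (xn : ℕ → H) (x y : H), (∀ n, xn n ∈ D) →
        Tendsto xn atTop (𝓝 x) →
        Tendsto (fun n => s (xn n)) atTop (𝓝 y) →
        x ∈ D ∧ s x = y) := by
  classical
  subst hD
  -- K is closed under negation and subtraction
  have hKneg : ∀ x ∈ K, -x ∈ K := by
    intro x hx
    have := hKsmul (-1) x hx
    simpa using this
  have hKsub : ∀ x ∈ K, ∀ y ∈ K, x - y ∈ K := by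
    intro x hx y hy
    simpa [sub_eq_add_neg] using hKadd x (-y) hx (hKneg y hy)
  -- uniqueness of decompositions
  have uniq : ∀ a ∈ K, ∀ b ∈ K, ∀ a' ∈ K, ∀ b' ∈ K,
      a + Complex.I • b = a' + Complex.I • b' → a = a' ∧ b = b' := by
    intro a ha b hb a' ha' b' hb' heq
    have h1 : a - a' = Complex.I • (b' - b) := by
      rw [smul_sub]
      rw [sub_eq_sub_iff_add_eq_add]
      rw [heq]; abel
    have h2 : a - a' = 0 := hKint _ (hKsub a ha a' ha') ⟨b' - b, hKsub b' hb' b hb, h1⟩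
    have ha2 : a = a' := sub_eq_zero.mp h2
    refine ⟨ha2, ?_⟩
    have h3 : Complex.I • b = Complex.I • b' := by
      have := heq
      rw [ha2] at this
      exact add_left_cancel this
    exact smul_right_injective H Complex.I_ne_zero h3
  set s : H → H := fun x =>
    if hx : ∃ h₁ ∈ K, ∃ h₂ ∈ K, x = h₁ + Complex.I • h₂ then
      -hx.choose + Complex.I • hx.choose_spec.2.choose
    else 0 with hsdef
  have swd : ∀ h₁ ∈ K, ∀ h₂ ∈ K, s (h₁ + Complex.I • h₂) = -h₁ + Complex.I • h₂ := by
    intro a ha b hb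
    have hx : ∃ h₁ ∈ K, ∃ h₂ ∈ K, a + Complex.I • b = h₁ + Complex.I • h₂ :=
      ⟨a, ha, b, hb, rfl⟩
    rw [hsdef]
    simp only [dif_pos hx]
    obtain ⟨e1, e2⟩ := uniq a ha b hb _ hx.choose_spec.1 _ hx.choose_spec.2.choose_spec.1
      hx.choose_spec.2.choose_spec.2
    exact congrArg₂ (fun z w : H => -z + Complex.I • w) e1.symm e2.symm
  refine ⟨s, swd, ?_, ?_, ?_, ?_, ?_, ?_⟩
  · -- uniqueness
    rintro s' hs' x ⟨a, ha, b, hb, rfl⟩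
    rw [hs' a ha b hb, swd a ha b hb]
  · -- maps D to D
    rintro x ⟨a, ha, b, hb, rfl⟩
    rw [swd a ha b hb]
    exact ⟨-a, hKneg a ha, b, hb, rfl⟩
  · -- additive
    rintro x ⟨a, ha, b, hb, rfl⟩ y ⟨a', ha', b', hb', rfl⟩
    have h1 : (a + Complex.I • b) + (a' + Complex.I • b') = (a + a') + Complex.I • (b + b') := by
      module
    rw [h1, swd _ (hKadd a a' ha ha') _ (hKadd b b' hb hb'), swd a ha b hb, swd a' ha' b' hb']
    module
  · -- conjugate-linear
    rintro c x ⟨a, ha, b, hb, rfl⟩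
    obtain ⟨p, q, rfl⟩ : ∃ p q : ℝ, c = (p : ℂ) + (q : ℂ) * Complex.I :=
      ⟨c.re, c.im, (Complex.re_add_im c).symm⟩
    have hcc : (starRingEnd ℂ) ((p : ℂ) + (q : ℂ) * Complex.I)
        = (p : ℂ) - (q : ℂ) * Complex.I := by
      simp [Complex.ext_iff]
    have h1 : ((p : ℂ) + (q : ℂ) * Complex.I) • (a + Complex.I • b)
        = (((p : ℝ) : ℂ) • a + ((-q : ℝ) : ℂ) • b)
          + Complex.I • (((q : ℝ) : ℂ) • a + ((p : ℝ) : ℂ) • b) := by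
      push_cast
      match_scalars <;>
        first
          | ring1
          | linear_combination Complex.I_sq
          | linear_combination -Complex.I_sq
          | linear_combination (q : ℂ) * Complex.I_sq
          | linear_combination (-(q : ℂ)) * Complex.I_sq
    rw [h1, swd _ (hKadd _ _ (hKsmul p a ha) (hKsmul (-q) b hb))
        _ (hKadd _ _ (hKsmul q a ha) (hKsmul p b hb)),
      swd a ha b hb, hcc]
    push_cast
    match_scalars <;>
      first
        | ring1
        | linear_combination Complex.I_sq
        | linear_combination -Complex.I_sq
        | linear_combination (q : ℂ) * Complex.I_sq
        | linear_combination (-(q : ℂ)) * Complex.I_sq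
  · -- involutive
    rintro x ⟨a, ha, b, hb, rfl⟩
    rw [swd a ha b hb, swd (-a) (hKneg a ha) b hb, neg_neg]
  · -- closed
    intro xn x y hxn hx hy
    set A : H := (2 : ℂ)⁻¹ • (x - y) with hA
    set B : H := -Complex.I • ((2 : ℂ)⁻¹ • (x + y)) with hB
    have haK : ∀ n, (2 : ℂ)⁻¹ • (xn n - s (xn n)) ∈ K := by
      intro n
      obtain ⟨p, hp, q, hq, he⟩ := hxn n
      rw [he, swd p hp q hq]
      have : (2 : ℂ)⁻¹ • ((p + Complex.I • q) - (-p + Complex.I • q)) = p := by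
        match_scalars <;> ring
      rw [this]; exact hp
    have hbK : ∀ n, -Complex.I • ((2 : ℂ)⁻¹ • (xn n + s (xn n))) ∈ K := by
      intro n
      obtain ⟨p, hp, q, hq, he⟩ := hxn n
      rw [he, swd p hp q hq]
      have : -Complex.I • ((2 : ℂ)⁻¹ • ((p + Complex.I • q) + (-p + Complex.I • q))) = q := by
        match_scalars <;>
        first
          | ring1
          | linear_combination Complex.I_sq
          | linear_combination -Complex.I_sq
          | linear_combination (2 : ℂ)⁻¹ * Complex.I_sq
          | linear_combination (-(2 : ℂ)⁻¹) * Complex.I_sq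
      rw [this]; exact hq
    have hta : Tendsto (fun n => (2 : ℂ)⁻¹ • (xn n - s (xn n))) atTop (𝓝 A) :=
      (hx.sub hy).const_smul _
    have htb : Tendsto (fun n => -Complex.I • ((2 : ℂ)⁻¹ • (xn n + s (xn n)))) atTop (𝓝 B) :=
      ((hx.add hy).const_smul _).const_smul _
    have hAK : A ∈ K := hKclosed.mem_of_tendsto hta (Eventually.of_forall haK)
    have hBK : B ∈ K := hKclosed.mem_of_tendsto htb (Eventually.of_forall hbK)
    have hxeq : x = A + Complex.I • B := by
      rw [hA, hB]
      match_scalars <;>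
        first
          | ring1
          | linear_combination Complex.I_sq
          | linear_combination -Complex.I_sq
          | linear_combination (2 : ℂ)⁻¹ * Complex.I_sq
          | linear_combination (-(2 : ℂ)⁻¹) * Complex.I_sq
    refine ⟨⟨A, hAK, B, hBK, hxeq⟩, ?_⟩
    have hsx := swd A hAK B hBK
    rw [← hxeq] at hsx
    rw [hsx, hA, hB]
    match_scalars <;>
      first
          | ring1
          | linear_combination Complex.I_sq
          | linear_combination -Complex.I_sq
          | linear_combination (2 : ℂ)⁻¹ * Complex.I_sq
          | linear_combination (-(2 : ℂ)⁻¹) * Complex.I_sq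
end

section
/- Let H be a complex Hilbert space, J : H → H a conjugate-linear isometric involution, and Δ a bounded positive invertible self-adjoint operator with J ∘ Δ ∘ J = Δ⁻¹; let √Δ be the positive square root of Δ and Δ^{it} the unitary obtained by continuous functional calculus from x ↦ x^{it}. Suppose ψ₁, ψ₂ ∈ H are fixed by the Tomita involution S = J ∘ √Δ, i.e. J(√Δ ψ_j) = ψ_j for j = 1, 2. Then for every real t the KMS boundary condition holds: ⟨ψ₂, Δ^{it}(Δ ψ₁)⟩ = ⟨Δ^{it} ψ₁, ψ₂⟩, where ⟨·,·⟩ is the inner product taken linear in its second argument. -/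
/-!
On the positive spectrum of `Δ`, `z ^ (I * t) = cos (t log z) + I sin (t log z)`, so
`Δ^{it} = cos (t log Δ) + I • sin (t log Δ)` with both summands in the real functional calculus.
Conjugation by `J` is a continuous real star-algebra automorphism sending `Δ` to `Δ⁻¹`; it therefore
fixes the even function `cos (t log Δ)`, negates the odd function `sin (t log Δ)`, and, being
antilinear, also negates `I`. Hence `J Δ^{it} J = Δ^{it}`. A fixed vector satisfies `√Δ ψ = J ψ`,
and `√Δ` commutes with `Δ^{it}`, so
`⟪ψ₂, Δ^{it} Δ ψ₁⟫ = ⟪√Δ ψ₂, Δ^{it} J ψ₁⟫ = ⟪J ψ₂, J Δ^{it} ψ₁⟫ = conj ⟪ψ₂, Δ^{it} ψ₁⟫`.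
-/

open ComplexConjugate
open scoped InnerProductSpace

open Complex in
theorem Complex.ofReal_cpow_I_mul {x : ℝ} (hx : 0 < x) (t : ℝ) :
    (x : ℂ) ^ (I * t) = Real.cos (t * Real.log x) + Real.sin (t * Real.log x) * I := by
  rw [cpow_def_of_ne_zero (by exact_mod_cast hx.ne'), ← ofReal_log hx.le]
  push_cast
  rw [show (Real.log x : ℂ) * (I * t) = (t * Real.log x : ℝ) * I by push_cast; ring, exp_mul_I]
  push_cast
  ring

section CStarAlgebra

variable {A : Type*} [CStarAlgebra A] [PartialOrder A] [StarOrderedRing A]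

open Complex ComplexOrder in
lemma cfc_cpow_I_mul {a : A} (ha : IsStrictlyPositive a) (t : ℝ) :
    cfc (fun z : ℂ => z ^ (I * t)) a =
      cfc (fun x => Real.cos (t * Real.log x)) a + I • cfc (fun x => Real.sin (t * Real.log x)) a := by
  have hpos : ∀ z ∈ spectrum ℂ a, 0 < z.re ∧ 0 = z.im := fun z hz =>
    Complex.pos_iff.mp (ha.spectrum_pos hz)
  have hre : ∀ z ∈ spectrum ℂ a, z.re ≠ 0 := fun z hz => (hpos z hz).1.ne'
  have hcos : ContinuousOn (fun z : ℂ => (Real.cos (t * Real.log z.re) : ℂ)) (spectrum ℂ a) := by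
    fun_prop (disch := exact hre)
  have hsin : ContinuousOn (fun z : ℂ => (Real.sin (t * Real.log z.re) : ℂ)) (spectrum ℂ a) := by
    fun_prop (disch := exact hre)
  have hsin' : ContinuousOn (fun z : ℂ => I • (Real.sin (t * Real.log z.re) : ℂ))
      (spectrum ℂ a) := by
    fun_prop (disch := exact hre)
  rw [cfc_real_eq_complex (fun x => Real.cos (t * Real.log x)) ha.isSelfAdjoint,
    cfc_real_eq_complex (fun x => Real.sin (t * Real.log x)) ha.isSelfAdjoint,
    ← cfc_smul I _ a hsin, ← cfc_add a _ _ hcos hsin']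
  refine cfc_congr fun z hz => ?_
  obtain ⟨hz_re, hz_im⟩ := hpos z hz
  conv_lhs => rw [← Complex.re_add_im z, ← hz_im]
  simp only [ofReal_zero, zero_mul, add_zero, ofReal_cpow_I_mul hz_re, smul_eq_mul]
  ring

end CStarAlgebra

lemma norm_eq_of_inner_eq_conj {H : Type*} [NormedAddCommGroup H] [InnerProductSpace ℂ H]
    {J : H → H} (hJinner : ∀ x y, ⟪J x, J y⟫_ℂ = conj ⟪x, y⟫_ℂ) (x : H) : ‖J x‖ = ‖x‖ := by
  rw [norm_eq_sqrt_re_inner (𝕜 := ℂ), norm_eq_sqrt_re_inner (𝕜 := ℂ) x, hJinner, RCLike.conj_re]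

namespace Antiunitary

variable {H : Type*} [NormedAddCommGroup H] [InnerProductSpace ℂ H] [CompleteSpace H]
  (J : H →L⋆[ℂ] H) (hJ : ∀ x, J (J x) = x) (hJinner : ∀ x y, ⟪J x, J y⟫_ℂ = conj ⟪x, y⟫_ℂ)

include hJ hJinner in
lemma adjoint_comp_comp (T : H →L[ℂ] H) :
    (J.comp (T.comp J)).adjoint = J.comp (T.adjoint.comp J) := by
  refine ((ContinuousLinearMap.eq_adjoint_iff _ _).mpr fun x y => ?_).symm
  simp only [ContinuousLinearMap.comp_apply]
  rw [← hJ y, hJinner, ContinuousLinearMap.adjoint_inner_left, ← hJinner, hJ, hJ]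

noncomputable def conjStarAlgHom : (H →L[ℂ] H) →⋆ₐ[ℝ] (H →L[ℂ] H) where
  toFun T := J.comp (T.comp J)
  map_one' := by ext x; simp [hJ]
  map_mul' S T := by ext x; simp [hJ]
  map_zero' := by ext x; simp
  map_add' S T := by ext x; simp
  commutes' r := by
    ext x
    simp [Algebra.algebraMap_eq_smul_one, ← Complex.coe_smul, hJ]
  map_star' T := by
    simp only [ContinuousLinearMap.star_eq_adjoint]
    exact (adjoint_comp_comp J hJ hJinner T).symm

lemma conjStarAlgHom_smul (c : ℂ) (T : H →L[ℂ] H) :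
    conjStarAlgHom J hJ hJinner (c • T) = conj c • conjStarAlgHom J hJ hJinner T := by
  ext x; simp [conjStarAlgHom]

lemma continuous_conjStarAlgHom : Continuous (conjStarAlgHom J hJ hJinner) :=
  AddMonoidHomClass.continuous_of_bound _ (‖J‖ * ‖J‖) fun T =>
    ContinuousLinearMap.opNorm_le_bound _ (by positivity) fun x => calc
      ‖J (T (J x))‖ ≤ ‖J‖ * (‖T‖ * (‖J‖ * ‖x‖)) :=
        J.le_opNorm_of_le (T.le_opNorm_of_le (J.le_opNorm x))
      _ = ‖J‖ * ‖J‖ * ‖T‖ * ‖x‖ := by ring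

open Complex in
lemma conjStarAlgHom_cfc_cpow_I_mul (u : (H →L[ℂ] H)ˣ) (hu : IsStrictlyPositive (u : H →L[ℂ] H))
    (hJu : conjStarAlgHom J hJ hJinner u = ↑u⁻¹) (t : ℝ) :
    conjStarAlgHom J hJ hJinner (cfc (fun z : ℂ => z ^ (I * t)) (u : H →L[ℂ] H)) =
      cfc (fun z : ℂ => z ^ (I * t)) (u : H →L[ℂ] H) := by
  have hne : ∀ x ∈ spectrum ℝ (u : H →L[ℂ] H), x ≠ 0 := fun x hx => (hu.spectrum_pos hx).ne'
  have hinv : (·⁻¹) '' spectrum ℝ (u : H →L[ℂ] H) ⊆ {0}ᶜ := by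
    rintro _ ⟨x, hx, rfl⟩
    exact inv_ne_zero (hne x hx)
  have hcos : ContinuousOn (fun x => Real.cos (t * Real.log x)) {0}ᶜ := by fun_prop
  have hsin : ContinuousOn (fun x => Real.sin (t * Real.log x)) {0}ᶜ := by fun_prop
  have hφ := continuous_conjStarAlgHom J hJ hJinner
  have hsa := hu.isSelfAdjoint
  have hφsa := hsa.map (conjStarAlgHom J hJ hJinner)
  rw [cfc_cpow_I_mul hu, map_add, conjStarAlgHom_smul,
    StarAlgHom.map_cfc _ _ _ (hcos.mono hne) hφ hsa hφsa,
    StarAlgHom.map_cfc _ _ _ (hsin.mono hne) hφ hsa hφsa, hJu,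
    ← cfc_comp_inv _ _ (hcos.mono hinv), ← cfc_comp_inv _ _ (hsin.mono hinv)]
  simp only [Real.log_inv, mul_neg, Real.cos_neg, Real.sin_neg, cfc_neg, conj_I, neg_smul,
    smul_neg, neg_neg]

include hJ hJinner in
lemma inner_apply_sq_eq_inner_of_fixed {R U : H →L[ℂ] H} (hR : IsSelfAdjoint R)
    (hRU : Commute R U) (hJU : ∀ x, J (U (J x)) = U x) {ψ₁ ψ₂ : H}
    (hψ₁ : J (R ψ₁) = ψ₁) (hψ₂ : J (R ψ₂) = ψ₂) :
    ⟪ψ₂, U (R (R ψ₁))⟫_ℂ = ⟪U ψ₁, ψ₂⟫_ℂ := by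
  have hR_fix : ∀ {ψ}, J (R ψ) = ψ → R ψ = J ψ := fun h => by rw [← h, hJ, h]
  have hRU_apply : U (R (J ψ₁)) = R (U (J ψ₁)) := (DFunLike.congr_fun hRU.eq (J ψ₁)).symm
  calc ⟪ψ₂, U (R (R ψ₁))⟫_ℂ = ⟪R ψ₂, U (J ψ₁)⟫_ℂ := by
        rw [hR_fix hψ₁, hRU_apply]; exact (hR.isSymmetric ψ₂ _).symm
    _ = ⟪J ψ₂, J (U ψ₁)⟫_ℂ := by rw [hR_fix hψ₂, ← hJU, hJ]
    _ = ⟪U ψ₁, ψ₂⟫_ℂ := by rw [hJinner, inner_conj_symm]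

end Antiunitary

open Antiunitary in
theorem stmt_7_general {H : Type*} [NormedAddCommGroup H] [InnerProductSpace ℂ H] [CompleteSpace H]
    (J : H → H)
    (hJinv : ∀ x : H, J (J x) = x)
    (hJadd : ∀ x y : H, J (x + y) = J x + J y)
    (hJsmul : ∀ (c : ℂ) (x : H), J (c • x) = (starRingEnd ℂ) c • J x)
    (hJinner : ∀ x y : H, (inner ℂ (J x) (J y) : ℂ) = (starRingEnd ℂ) (inner ℂ x y : ℂ))
    (Δ Δinv R : H →L[ℂ] H)
    (hΔsa : IsSelfAdjoint Δ)
    (hΔpos : ∀ x : H, 0 ≤ (inner ℂ x (Δ x) : ℂ).re)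
    (hΔinv₁ : Δ.comp Δinv = ContinuousLinearMap.id ℂ H)
    (hΔinv₂ : Δinv.comp Δ = ContinuousLinearMap.id ℂ H)
    (hmodular : ∀ x : H, J (Δ (J x)) = Δinv x)
    (hRsa : IsSelfAdjoint R)
    (hRsq : R.comp R = Δ)
    (ψ₁ ψ₂ : H)
    (hψ₁ : J (R ψ₁) = ψ₁) (hψ₂ : J (R ψ₂) = ψ₂) :
    ∀ t : ℝ,
      (inner ℂ ψ₂ ((cfc (fun z : ℂ => z ^ (Complex.I * (t : ℂ))) Δ) (Δ ψ₁)) : ℂ) =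
        (inner ℂ ((cfc (fun z : ℂ => z ^ (Complex.I * (t : ℂ))) Δ) ψ₁) ψ₂ : ℂ) := by
  intro t
  let J' : H →L⋆[ℂ] H := LinearMap.mkContinuous ⟨⟨J, hJadd⟩, hJsmul⟩ 1 fun x => by
    simp [norm_eq_of_inner_eq_conj hJinner]
  let u : (H →L[ℂ] H)ˣ := ⟨Δ, Δinv, hΔinv₁, hΔinv₂⟩
  have hΔ_pos : IsStrictlyPositive Δ := u.isUnit.isStrictlyPositive <|
    (ContinuousLinearMap.nonneg_iff_isPositive Δ).mpr <|
      ContinuousLinearMap.isPositive_def'.mpr ⟨hΔsa, fun x => by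
        rw [ContinuousLinearMap.reApplyInnerSelf, inner_re_symm]; exact hΔpos x⟩
  have hJU := conjStarAlgHom_cfc_cpow_I_mul J' hJinv hJinner u hΔ_pos
    (ContinuousLinearMap.ext hmodular) t
  have hRΔ : Commute Δ R := by rw [← hRsq]; exact (Commute.refl R).mul_left (Commute.refl R)
  have hΔR : Δ ψ₁ = R (R ψ₁) := by rw [← hRsq]; rfl
  rw [hΔR]
  exact inner_apply_sq_eq_inner_of_fixed J' hJinv hJinner hRsa
    (hΔsa.commute_cfc hRΔ _).symm (fun x => congr($hJU x)) hψ₁ hψ₂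

/-- KMS boundary condition for modular-localized vectors. If
`ψ₁, ψ₂` are fixed by the Tomita involution `S = J√Δ` (i.e. `J(√Δ ψⱼ) = ψⱼ`),
with `J` a conjugate-linear isometric involution, `Δ` bounded positive invertible
self-adjoint, `JΔJ = Δ⁻¹`, and `Δ^{it}` defined by continuous functional calculus,
then `⟨ψ₂, Δ^{it}(Δψ₁)⟩ = ⟨Δ^{it}ψ₁, ψ₂⟩` for all real `t`. -/
theorem stmt_7 {H : Type*} [NormedAddCommGroup H] [InnerProductSpace ℂ H] [CompleteSpace H]
    (J : H → H)
    (hJinv : ∀ x : H, J (J x) = x)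
    (hJadd : ∀ x y : H, J (x + y) = J x + J y)
    (hJsmul : ∀ (c : ℂ) (x : H), J (c • x) = (starRingEnd ℂ) c • J x)
    (hJinner : ∀ x y : H, (inner ℂ (J x) (J y) : ℂ) = (starRingEnd ℂ) (inner ℂ x y : ℂ))
    (Δ Δinv R : H →L[ℂ] H)
    (hΔsa : IsSelfAdjoint Δ)
    (hΔpos : ∀ x : H, 0 ≤ (inner ℂ x (Δ x) : ℂ).re)
    (hΔinv₁ : Δ.comp Δinv = ContinuousLinearMap.id ℂ H)
    (hΔinv₂ : Δinv.comp Δ = ContinuousLinearMap.id ℂ H)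
    (hmodular : ∀ x : H, J (Δ (J x)) = Δinv x)
    (hRsa : IsSelfAdjoint R)
    (hRpos : ∀ x : H, 0 ≤ (inner ℂ x (R x) : ℂ).re)
    (hRsq : R.comp R = Δ)
    (ψ₁ ψ₂ : H)
    (hψ₁ : J (R ψ₁) = ψ₁) (hψ₂ : J (R ψ₂) = ψ₂) :
    ∀ t : ℝ,
      (inner ℂ ψ₂ ((cfc (fun z : ℂ => z ^ (Complex.I * (t : ℂ))) Δ) (Δ ψ₁)) : ℂ) =
        (inner ℂ ((cfc (fun z : ℂ => z ^ (Complex.I * (t : ℂ))) Δ) ψ₁) ψ₂ : ℂ) :=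
  stmt_7_general J hJinv hJadd hJsmul hJinner Δ Δinv R hΔsa hΔpos hΔinv₁ hΔinv₂ hmodular hRsa hRsq
    ψ₁ ψ₂ hψ₁ hψ₂
end

section
/- Let H be a complex Hilbert space, η a bounded self-adjoint operator on H, and J₀ : H → H a conjugate-linear isometric involution (J₀∘J₀ = id) which commutes with η: J₀ ∘ η = η ∘ J₀. Set V := exp(i·η) (a unitary) and U := exp(i·η/2). Then: (i) V = U ∘ J₀ ∘ U* ∘ J₀, where U* = exp(−i·η/2) is the adjoint of U; (ii) J₀ ∘ V ∘ J₀ = V* = exp(−i·η). -/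
/-!
Since `J₀` preserves the inner product up to conjugation, it is a continuous conjugate-linear
isometry, so it passes through the exponential series term by term; as it commutes with `η` and
conjugates scalars, `J₀ ∘ exp(c η) = exp(c̄ η) ∘ J₀`. Hence `J₀ U* J₀ = U`, so `U J₀ U* J₀ = U² = V`,
and `J₀ V J₀ = exp(-iη) = V*`.
-/

open NormedSpace ContinuousLinearMap

theorem norm_map_of_inner_map_map_eq_conj {𝕜 E : Type*} [RCLike 𝕜] [SeminormedAddCommGroup E]
    [InnerProductSpace 𝕜 E] {J : E → E}
    (hJ : ∀ x y : E, (inner 𝕜 (J x) (J y) : 𝕜) = starRingEnd 𝕜 (inner 𝕜 x y)) (x : E) :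
    ‖J x‖ = ‖x‖ := by
  rw [norm_eq_sqrt_re_inner (𝕜 := 𝕜), norm_eq_sqrt_re_inner (𝕜 := 𝕜) x, hJ, RCLike.conj_re]

theorem ContinuousLinearMap.semiconj_exp {𝕜 E F : Type*} [RCLike 𝕜]
    [NormedAddCommGroup E] [NormedSpace 𝕜 E] [CompleteSpace E]
    [NormedAddCommGroup F] [NormedSpace 𝕜 F] [CompleteSpace F]
    {σ : 𝕜 →+* 𝕜} (J : E →SL[σ] F) {A : E →L[𝕜] E} {B : F →L[𝕜] F}
    (h : Function.Semiconj J A B) : Function.Semiconj J ⇑(exp A) ⇑(exp B) := by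
  intro x
  have hA := ((exp_series_hasSum_exp' (𝕂 := 𝕜) A).mapL (apply 𝕜 E x)).mapL J
  have hB := (exp_series_hasSum_exp' (𝕂 := 𝕜) B).mapL (apply 𝕜 F (J x))
  refine hA.unique (hB.congr_fun fun n => ?_)
  simp only [apply_apply, map_smulₛₗ, map_inv₀, map_natCast, FunLike.coe_pow_eq_iterate,
    (h.iterate_right n).eq]

theorem IsSelfAdjoint.star_exp_smul {𝕜 𝔸 : Type*} [RCLike 𝕜] [NormedRing 𝔸] [NormedAlgebra 𝕜 𝔸]
    [StarRing 𝔸] [ContinuousStar 𝔸] [StarModule 𝕜 𝔸] {a : 𝔸} (ha : IsSelfAdjoint a) (c : 𝕜) :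
    star (NormedSpace.exp (c • a)) = NormedSpace.exp (star c • a) := by
  rw [star_exp, star_smul, ha.star_eq]

theorem exp_half_smul_mul_self {𝕜 𝔸 : Type*} [RCLike 𝕜] [NormedRing 𝔸] [NormedAlgebra 𝕜 𝔸]
    [CompleteSpace 𝔸] (c : 𝕜) (a : 𝔸) :
    exp ((c / 2) • a) * exp ((c / 2) • a) = exp (c • a) := by
  let +nondep : NormedAlgebra ℚ 𝔸 := .restrictScalars ℚ 𝕜 𝔸
  rw [← exp_add_of_commute (Commute.refl _), ← add_smul, add_halves]

open NormedSpace ContinuousLinearMap in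
/-- Modular Møller operator from a Hermitian phase. For a bounded
self-adjoint `η` and a conjugate-linear isometric involution `J₀` commuting with
`η`, setting `V := exp(iη)` and `U := exp(iη/2)`: (i) `V = U ∘ J₀ ∘ U* ∘ J₀` with
`U* = adjoint U = exp(−iη/2)`; (ii) `J₀ ∘ V ∘ J₀ = V* = exp(−iη)`. -/
theorem stmt_8 {H : Type*} [NormedAddCommGroup H] [InnerProductSpace ℂ H] [CompleteSpace H]
    (η : H →L[ℂ] H) (hηsa : IsSelfAdjoint η)
    (J₀ : H → H)
    (hJinv : ∀ x : H, J₀ (J₀ x) = x)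
    (hJadd : ∀ x y : H, J₀ (x + y) = J₀ x + J₀ y)
    (hJsmul : ∀ (c : ℂ) (x : H), J₀ (c • x) = (starRingEnd ℂ) c • J₀ x)
    (hJinner : ∀ x y : H, (inner ℂ (J₀ x) (J₀ y) : ℂ) = (starRingEnd ℂ) (inner ℂ x y : ℂ))
    (hcomm : ∀ x : H, J₀ (η x) = η (J₀ x))
    (V U : H →L[ℂ] H)
    (hV : V = NormedSpace.exp (Complex.I • η))
    (hU : U = NormedSpace.exp ((Complex.I / 2) • η)) :
    -- the adjoint of U is exp(−iη/2)
    ContinuousLinearMap.adjoint U = NormedSpace.exp ((-(Complex.I / 2)) • η) ∧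
    -- (i) V = U ∘ J₀ ∘ U* ∘ J₀
    (∀ x : H, V x = U (J₀ ((ContinuousLinearMap.adjoint U) (J₀ x)))) ∧
    -- (ii) J₀ ∘ V ∘ J₀ = V* = exp(−iη)
    (∀ x : H, J₀ (V (J₀ x)) = (ContinuousLinearMap.adjoint V) x) ∧
    ContinuousLinearMap.adjoint V = NormedSpace.exp ((-Complex.I) • η) := by
  let J : H →L⋆[ℂ] H := LinearIsometry.toContinuousLinearMap
    ⟨⟨⟨J₀, hJadd⟩, hJsmul⟩, norm_map_of_inner_map_map_eq_conj hJinner⟩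
  have hJexp (c : ℂ) : Function.Semiconj J₀ ⇑(exp (c • η)) ⇑(exp (star c • η)) :=
    J.semiconj_exp fun x => by simp [J, hcomm]
  have hadj (c : ℂ) : adjoint (exp (c • η)) = exp (star c • η) := by
    rw [← star_eq_adjoint, hηsa.star_exp_smul]
  have hconj : star (Complex.I / 2) = -(Complex.I / 2) := by simp [neg_div]
  have hAdjU : adjoint U = exp (-(Complex.I / 2) • η) := by rw [hU, hadj, hconj]
  have hAdjV : adjoint V = exp (-Complex.I • η) := by
    rw [hV, hadj, Complex.star_def, Complex.conj_I]
  refine ⟨hAdjU, fun x => ?_, fun x => ?_, hAdjV⟩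
  · rw [hAdjU, hJexp, hJinv, star_neg, hconj, neg_neg, hU, hV,
      ← exp_half_smul_mul_self Complex.I η]
    rfl
  · rw [hV, hJexp, hJinv, hadj]
end

section
/- Let n ≥ 1, let F : ℝⁿ → (Fin n → Fin n → ℝ) be a smooth compactly supported field-strength tensor which is antisymmetric, F(x) μ ν = −F(x) ν μ for all x, μ, ν, and closed (Bianchi identity): ∂_μ F_{νρ}(x) + ∂_ν F_{ρμ}(x) + ∂_ρ F_{μν}(x) = 0 for all x and all indices, where ∂_μ denotes the partial derivative in the μ-th coordinate direction. Fix a nonzero vector e ∈ ℝⁿ and define the string-localized potential A : ℝⁿ → (Fin n → ℝ) by A(x) ν := ∫_0^∞ ∑_ρ e_ρ · F(x − s·e) ρ ν ds (the integral converges since F has compact support). Then A is differentiable and its exterior derivative recovers F: for all x, μ, ν, ∂_μ(A_ν)(x) − ∂_ν(A_μ)(x) = F(x) μ ν. -/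
open MeasureTheory Set Metric Filter

section aux

variable {n : ℕ}

lemma line_norm_gt {x x₀ e : EuclideanSpace ℝ (Fin n)} (he : e ≠ 0) {M s : ℝ}
    (hx : ‖x - x₀‖ < 1) (hs : (‖x₀‖ + 1 + M) / ‖e‖ < |s|) : M < ‖x - s • e‖ := by
  have hepos : 0 < ‖e‖ := norm_pos_iff.2 he
  have h1 : ‖x₀‖ + 1 + M < |s| * ‖e‖ := (div_lt_iff₀ hepos).1 hs
  have h2 : ‖x‖ ≤ ‖x₀‖ + 1 := by
    have := norm_sub_norm_le x x₀
    linarith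
  have h3 : ‖s • e‖ - ‖x‖ ≤ ‖x - s • e‖ := by
    have := norm_sub_norm_le (s • e) x
    rw [norm_sub_rev] at this
    linarith
  rw [norm_smul, Real.norm_eq_abs] at h3
  linarith

lemma line_hcs {E : Type*} [NormedAddCommGroup E] (φ : EuclideanSpace ℝ (Fin n) → E)
    (hcs : HasCompactSupport φ) (x e : EuclideanSpace ℝ (Fin n)) (he : e ≠ 0) :
    HasCompactSupport (fun s : ℝ => φ (x - s • e)) := by
  obtain ⟨M, hM⟩ := hcs.isBounded.subset_closedBall 0
  set R := (‖x‖ + 1 + M) / ‖e‖ with hR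
  apply HasCompactSupport.intro (isCompact_Icc (a := -R) (b := R))
  intro s hs
  apply image_eq_zero_of_notMem_tsupport
  intro hmem
  have h1 : ‖x - s • e‖ ≤ M := by simpa using mem_closedBall_iff_norm.1 (hM hmem)
  have h2 : R < |s| := not_le.1 fun h => hs (by rwa [Set.mem_Icc, ← abs_le])
  exact absurd h1 (not_le.2 (line_norm_gt he (by simp) h2))

lemma line_integrable {E : Type*} [NormedAddCommGroup E] (φ : EuclideanSpace ℝ (Fin n) → E)
    (hc : Continuous φ) (hcs : HasCompactSupport φ) (x e : EuclideanSpace ℝ (Fin n))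
    (he : e ≠ 0) : IntegrableOn (fun s : ℝ => φ (x - s • e)) (Set.Ioi (0:ℝ)) := by
  have hline : Continuous fun s : ℝ => x - s • e :=
    continuous_const.sub (continuous_id.smul continuous_const)
  exact ((hc.comp hline).integrable_of_hasCompactSupport
    (line_hcs φ hcs x e he)).integrableOn

lemma tendsto_atTop_of_hcs {ψ : ℝ → ℝ} (h : HasCompactSupport ψ) :
    Tendsto ψ atTop (nhds 0) := by
  obtain ⟨r, hr⟩ := h.isBounded.subset_closedBall 0
  have hev : ∀ᶠ s in atTop, ψ s = 0 := by
    filter_upwards [eventually_gt_atTop r] with s hs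
    apply image_eq_zero_of_notMem_tsupport
    intro hmem
    have : ‖s‖ ≤ r := by simpa using mem_closedBall_iff_norm.1 (hr hmem)
    rw [Real.norm_eq_abs] at this
    have := le_abs_self s
    linarith
  exact tendsto_const_nhds.congr' (by filter_upwards [hev] with s hs using hs.symm)

lemma hasFDerivAt_line_integral (φ : EuclideanSpace ℝ (Fin n) → ℝ) (hφ : ContDiff ℝ (⊤ : ℕ∞) φ)
    (hcs : HasCompactSupport φ) (e : EuclideanSpace ℝ (Fin n)) (he : e ≠ 0)
    (x₀ : EuclideanSpace ℝ (Fin n)) :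
    HasFDerivAt (fun x => ∫ s in Set.Ioi (0:ℝ), φ (x - s • e))
      (∫ s in Set.Ioi (0:ℝ), fderiv ℝ φ (x₀ - s • e)) x₀ := by
  have hline : Continuous fun s : ℝ => x₀ - s • e :=
    continuous_const.sub (continuous_id.smul continuous_const)
  have hφc : Continuous φ := hφ.continuous
  have hφ'c : Continuous (fderiv ℝ φ) := hφ.continuous_fderiv (by simp)
  have hφd : Differentiable ℝ φ := hφ.differentiable (by simp)
  have hcs' : HasCompactSupport (fderiv ℝ φ) := hcs.fderiv (𝕜 := ℝ)
  obtain ⟨C, hC⟩ := hφ'c.bounded_above_of_compact_support hcs'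
  obtain ⟨M, hM⟩ := hcs'.isBounded.subset_closedBall 0
  set R := (‖x₀‖ + 1 + M) / ‖e‖ with hR
  apply hasFDerivAt_integral_of_dominated_of_fderiv_le
    (F' := fun x s => fderiv ℝ φ (x - s • e))
    (bound := Set.indicator (Set.Icc (-R) R) fun _ => C) (ball_mem_nhds x₀ one_pos)
  · filter_upwards with x
    exact ((hφc.comp (continuous_const.sub
      (continuous_id.smul continuous_const))).aestronglyMeasurable)
  · exact line_integrable φ hφc hcs x₀ e he
  · exact ((hφ'c.comp hline).aestronglyMeasurable)
  · apply ae_of_all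
    intro s x hx
    by_cases hs : s ∈ Set.Icc (-R) R
    · rw [Set.indicator_of_mem hs]
      exact hC _
    · rw [Set.indicator_of_notMem hs]
      have h2 : R < |s| := not_le.1 fun h => hs (by rwa [Set.mem_Icc, ← abs_le])
      have hxx : ‖x - x₀‖ < 1 := mem_ball_iff_norm.1 hx
      have := line_norm_gt (x := x) he hxx h2
      have hz : fderiv ℝ φ (x - s • e) = 0 := by
        apply image_eq_zero_of_notMem_tsupport
        intro hmem
        have : ‖x - s • e‖ ≤ M := by simpa using mem_closedBall_iff_norm.1 (hM hmem)
        linarith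
      simp [hz]
  · exact ((integrableOn_const (C := C)
      measure_Icc_lt_top.ne).integrable_indicator measurableSet_Icc).restrict
  · apply ae_of_all
    intro s x hx
    have h1 : HasFDerivAt (fun y : EuclideanSpace ℝ (Fin n) => y - s • e)
        (ContinuousLinearMap.id ℝ _) x := (hasFDerivAt_id x).sub_const (s • e)
    have h2 := (hφd (x - s • e)).hasFDerivAt
    simpa [Function.comp_def] using h2.comp x h1

end aux

open MeasureTheory

/-- The string-localized potential
`A_ν(x) := ∫_0^∞ ∑_ρ e_ρ F_{ρν}(x − s·e) ds` built from a smooth compactly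
supported antisymmetric field strength `F` satisfying the Bianchi identity
recovers `F` as its exterior derivative: `∂_μ A_ν − ∂_ν A_μ = F_{μν}`. -/
theorem stmt_11 (n : ℕ) (hn : 1 ≤ n)
    (F : EuclideanSpace ℝ (Fin n) → (Fin n → Fin n → ℝ))
    (hFsmooth : ContDiff ℝ (⊤ : ℕ∞) F)
    (hFsupp : HasCompactSupport F)
    (hFanti : ∀ (x : EuclideanSpace ℝ (Fin n)) (μ ν : Fin n), F x μ ν = -F x ν μ)
    (hBianchi : ∀ (x : EuclideanSpace ℝ (Fin n)) (μ ν ρ : Fin n),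
      fderiv ℝ (fun y => F y ν ρ) x (EuclideanSpace.single μ 1) +
      fderiv ℝ (fun y => F y ρ μ) x (EuclideanSpace.single ν 1) +
      fderiv ℝ (fun y => F y μ ν) x (EuclideanSpace.single ρ 1) = 0)
    (e : EuclideanSpace ℝ (Fin n)) (he : e ≠ 0)
    (A : EuclideanSpace ℝ (Fin n) → (Fin n → ℝ))
    (hA : A = fun x ν => ∫ s in Set.Ioi (0 : ℝ), ∑ ρ : Fin n, e ρ * F (x - s • e) ρ ν) :
    (∀ ν : Fin n, Differentiable ℝ (fun x => A x ν)) ∧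
    (∀ (x : EuclideanSpace ℝ (Fin n)) (μ ν : Fin n),
      fderiv ℝ (fun y => A y ν) x (EuclideanSpace.single μ 1) -
      fderiv ℝ (fun y => A y μ) x (EuclideanSpace.single ν 1) = F x μ ν) := by
  classical
  -- component facts
  have hFc : ∀ ρ σ : Fin n, ContDiff ℝ (⊤ : ℕ∞) (fun y => F y ρ σ) := fun ρ σ =>
    contDiff_pi.mp (contDiff_pi.mp hFsmooth ρ) σ
  have hFd : ∀ ρ σ : Fin n, Differentiable ℝ (fun y => F y ρ σ) := fun ρ σ =>
    (hFc ρ σ).differentiable (by simp)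
  have hFcs : ∀ ρ σ : Fin n, HasCompactSupport (fun y => F y ρ σ) := fun ρ σ =>
    hFsupp.comp_left (g := fun M : Fin n → Fin n → ℝ => M ρ σ) rfl
  -- the integrand G
  set G : Fin n → EuclideanSpace ℝ (Fin n) → ℝ :=
    fun ν y => ∑ ρ : Fin n, e ρ * F y ρ ν with hGdef
  have hGsmooth : ∀ ν, ContDiff ℝ (⊤ : ℕ∞) (G ν) := fun ν =>
    ContDiff.sum fun ρ _ => contDiff_const.mul (hFc ρ ν)
  have hGsupp : ∀ ν, HasCompactSupport (G ν) := fun ν =>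
    hFsupp.comp_left (g := fun M : Fin n → Fin n → ℝ => ∑ ρ : Fin n, e ρ * M ρ ν)
      (by simp)
  have hAν : ∀ ν, (fun x => A x ν) = fun x => ∫ s in Set.Ioi (0:ℝ), G ν (x - s • e) := by
    intro ν; subst hA; rfl
  have hDer : ∀ ν x₀, HasFDerivAt (fun x => A x ν)
      (∫ s in Set.Ioi (0:ℝ), fderiv ℝ (G ν) (x₀ - s • e)) x₀ := by
    intro ν x₀
    rw [hAν ν]
    exact hasFDerivAt_line_integral (G ν) (hGsmooth ν) (hGsupp ν) e he x₀
  constructor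
  · exact fun ν x => (hDer ν x).differentiableAt
  intro x μ ν
  -- integrability of the CLM-valued integrand
  have hint : ∀ σ : Fin n, IntegrableOn
      (fun s : ℝ => fderiv ℝ (G σ) (x - s • e)) (Set.Ioi (0:ℝ)) := fun σ =>
    line_integrable _ ((hGsmooth σ).continuous_fderiv (by simp)) (HasCompactSupport.fderiv (𝕜 := ℝ) (hGsupp σ)) x e he
  have happ : ∀ (σ : Fin n) (v : EuclideanSpace ℝ (Fin n)),
      fderiv ℝ (fun y => A y σ) x v =
        ∫ s in Set.Ioi (0:ℝ), fderiv ℝ (G σ) (x - s • e) v := by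
    intro σ v
    rw [(hDer σ x).fderiv]
    exact ContinuousLinearMap.integral_apply (hint σ) v
  -- integrability of the applied integrands
  have hintv : ∀ (σ : Fin n) (v : EuclideanSpace ℝ (Fin n)), IntegrableOn
      (fun s : ℝ => fderiv ℝ (G σ) (x - s • e) v) (Set.Ioi (0:ℝ)) := by
    intro σ v
    apply line_integrable (fun y => fderiv ℝ (G σ) y v)
      (((hGsmooth σ).continuous_fderiv (by simp)).clm_apply continuous_const)
      ((HasCompactSupport.fderiv (𝕜 := ℝ) (hGsupp σ)).comp_left (g := fun L : _ →L[ℝ] ℝ => L v) rfl) x e he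
  -- basis expansion of e
  have ebasis : (∑ ρ : Fin n, e ρ • EuclideanSpace.single ρ (1:ℝ)) = e := by
    simpa [EuclideanSpace.basisFun_apply, EuclideanSpace.basisFun_repr] using
      (EuclideanSpace.basisFun (Fin n) ℝ).sum_repr e
  -- derivative of G applied
  have hGfd : ∀ (σ : Fin n) (y : EuclideanSpace ℝ (Fin n)) (v : EuclideanSpace ℝ (Fin n)),
      fderiv ℝ (G σ) y v = ∑ ρ : Fin n, e ρ * fderiv ℝ (fun z => F z ρ σ) y v := by
    intro σ y v
    have h : HasFDerivAt (G σ) (∑ ρ : Fin n, e ρ • fderiv ℝ (fun z => F z ρ σ) y) y :=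
      HasFDerivAt.fun_sum fun ρ _ => ((hFd ρ σ y).hasFDerivAt).const_mul (e ρ)
    rw [h.fderiv]
    simp
  -- antisymmetry of derivatives
  have hanti_fd : ∀ (ρ σ : Fin n) (y v : EuclideanSpace ℝ (Fin n)),
      fderiv ℝ (fun z => F z ρ σ) y v = -fderiv ℝ (fun z => F z σ ρ) y v := by
    intro ρ σ y v
    have h : (fun z => F z ρ σ) = fun z => -F z σ ρ := funext fun z => hFanti z ρ σ
    rw [h, fderiv_fun_neg]
    simp
  -- pointwise key identity
  have key : ∀ y : EuclideanSpace ℝ (Fin n),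
      fderiv ℝ (G ν) y (EuclideanSpace.single μ 1) -
        fderiv ℝ (G μ) y (EuclideanSpace.single ν 1) =
        fderiv ℝ (fun z => F z μ ν) y e := by
    intro y
    rw [hGfd, hGfd, ← Finset.sum_sub_distrib]
    conv_rhs => rw [← ebasis]
    rw [map_sum]
    apply Finset.sum_congr rfl
    intro ρ _
    rw [_root_.map_smul]
    have h1 := hanti_fd ρ ν y (EuclideanSpace.single μ 1)
    have hB' := hBianchi y μ ν ρ
    have hinner : fderiv ℝ (fun z => F z ρ ν) y (EuclideanSpace.single μ 1) -
        fderiv ℝ (fun z => F z ρ μ) y (EuclideanSpace.single ν 1) =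
        fderiv ℝ (fun z => F z μ ν) y (EuclideanSpace.single ρ 1) := by linarith
    rw [smul_eq_mul, ← mul_sub, hinner]
  -- the FTC step
  have hFTC : (∫ s in Set.Ioi (0:ℝ), fderiv ℝ (fun z => F z μ ν) (x - s • e) e) =
      F x μ ν := by
    set g : ℝ → ℝ := fun s => F (x - s • e) μ ν with hgdef
    have hgderiv : ∀ s : ℝ, HasDerivAt g
        (-(fderiv ℝ (fun z => F z μ ν) (x - s • e) e)) s := by
      intro s
      have hu : HasDerivAt (fun s : ℝ => x - s • e) (-e) s := by
        have h1 : HasDerivAt (fun s : ℝ => s • e) e s := by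
          simpa using (hasDerivAt_id s).smul_const e
        simpa using h1.const_sub x
      have := ((hFd μ ν (x - s • e)).hasFDerivAt).comp_hasDerivAt s hu
      simpa [map_neg, hgdef, Function.comp_def] using this
    have hgc : Continuous g := by
      exact ((hFc μ ν).continuous).comp
        (continuous_const.sub (continuous_id.smul continuous_const))
    have hgint : IntegrableOn
        (fun s : ℝ => -(fderiv ℝ (fun z => F z μ ν) (x - s • e) e)) (Set.Ioi (0:ℝ)) := by
      apply line_integrable (fun y => -(fderiv ℝ (fun z => F z μ ν) y e))
        ((((hFc μ ν).continuous_fderiv (by simp)).clm_apply continuous_const).neg)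
        ((HasCompactSupport.fderiv (𝕜 := ℝ) (hFcs μ ν)).comp_left (g := fun L : _ →L[ℝ] ℝ => -(L e)) (by simp)) x e he
    have hgtend : Filter.Tendsto g Filter.atTop (nhds 0) :=
      tendsto_atTop_of_hcs (line_hcs _ (hFcs μ ν) x e he)
    have := integral_Ioi_of_hasDerivAt_of_tendsto
      (hgc.continuousWithinAt) (fun s _ => hgderiv s) hgint hgtend
    rw [MeasureTheory.integral_neg] at this
    have hg0 : g 0 = F x μ ν := by simp [hgdef]
    have : (∫ s in Set.Ioi (0:ℝ), fderiv ℝ (fun z => F z μ ν) (x - s • e) e) = g 0 := by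
      linarith
    rw [this, hg0]
  rw [happ ν (EuclideanSpace.single μ 1), happ μ (EuclideanSpace.single ν 1),
    ← MeasureTheory.integral_sub (hintv ν _) (hintv μ _)]
  rw [← hFTC]
  exact MeasureTheory.integral_congr_ae (Filter.Eventually.of_forall fun s => key (x - s • e))
end
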